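/- arXiv:1311.2774 — 2 statements merged into one kernel-verified Lean document; each statement's English description precedes it below -/
import Mathlib

section
/- Let p be a prime, R a perfect 𝔽_p-algebra, and n ≥ 0 an integer. Then the map R → I^n/I^{n+1} sending r to the class of p^n·[r] is a bijection, and it is additive: the class of p^n·[r+s] equals the class of p^n·[r] + p^n·[s] in I^n/I^{n+1}; hence it is an isomorphism of additive groups R ≅ I^n/I^{n+1}. -/
set_option synthInstance.maxHeartbeats 1000000
set_option maxHeartbeats 1000000

open MonoidAlgebra

/-- `ℤR`: the monoid algebra over `ℤ` of the multiplicative monoid `(R, ·)`. -/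
abbrev ZR (R : Type*) [CommRing R] : Type _ := MonoidAlgebra ℤ R

/-- The canonical ring homomorphism `π : ℤR → R`, `Σ n_r [r] ↦ Σ n_r r`. -/
noncomputable def piHom (R : Type*) [CommRing R] : ZR R →+* R :=
  (MonoidAlgebra.lift ℤ R R (MonoidHom.id R)).toRingHom

/-- The ideal `I = ker (π : ℤR → R)`. -/
noncomputable def Iid (R : Type*) [CommRing R] : Ideal (ZR R) := RingHom.ker (piHom R)

lemma p_mem_Iid (p : ℕ) (R : Type*) [CommRing R] [CharP R p] : (p : ZR R) ∈ Iid R := by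
  have h : piHom R (p : ZR R) = 0 := by
    rw [map_natCast]; exact CharP.cast_eq_zero R p
  exact RingHom.mem_ker.mpr h

lemma pow_mul_single_mem_Iid_pow (p : ℕ) (R : Type*) [CommRing R] [CharP R p] (n : ℕ) (r : R) :
    (p : ZR R) ^ n * of ℤ R r ∈ Iid R ^ n :=
  Ideal.mul_mem_right _ _ (Ideal.pow_mem_pow (p_mem_Iid p R) n)

/-- The map `R → I^n/I^(n+1)`, `r ↦ class of p^n·[r]`.  Here `I^n/I^(n+1)` is realized as the
quotient of the `ℤR`-module `I^n` by the submodule `I^(n+1) ⊆ I^n`. -/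
noncomputable def pnMap (p : ℕ) (R : Type*) [CommRing R] [CharP R p] (n : ℕ) :
    R → (↥(Iid R ^ n) ⧸ (Submodule.comap (Iid R ^ n).subtype (Iid R ^ (n + 1)))) :=
  fun r => Submodule.Quotient.mk ⟨(p : ZR R) ^ n * of ℤ R r, pow_mul_single_mem_Iid_pow p R n r⟩

/-!
Additivity and surjectivity only need the Frobenius to be surjective. Writing `a = α ^ p` and
`b = β ^ p`, the defect `[a + b] - [a] - [b]` lies in `(p) + I²`; an additive map that kills it
factors through `π`, so `I ⊆ (p) + I²`, and inductively `I ^ n ⊆ (p ^ n) + I ^ (n + 1)`.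

Injectivity goes through the Teichmüller lift `θ : ℤR → W(R)`, `[r] ↦ τ r`. Since `θ(I)`
consists of Witt vectors with vanishing constant coefficient, the first `n + 1` coefficients of
anything in `θ(I ^ (n + 1))` vanish, whereas the `n`-th coefficient of
`θ(p ^ n ([r] - [s])) = p ^ n (τ r - τ s)` is `(r - s) ^ p ^ n`; injectivity of the Frobenius
then gives `r = s`.
-/

open Function WittVector

section

variable {A : Type*} [CommSemiring A] {I : Ideal A} {a : A}

theorem Ideal.pow_le_span_pow_sup_pow_succ (ha : a ∈ I) (hI : I ≤ span {a} ⊔ I ^ 2)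
    (n : ℕ) : I ^ n ≤ span {a ^ n} ⊔ I ^ (n + 1) := by
  induction n with
  | zero => simp
  | succ n ih =>
    have hspan : span {a ^ n} * I ≤ span {a ^ (n + 1)} ⊔ I ^ (n + 2) :=
      calc span {a ^ n} * I ≤ span {a ^ n} * (span {a} ⊔ I ^ 2) := mul_mono_right hI
        _ = span {a ^ (n + 1)} ⊔ span {a ^ n} * I ^ 2 := by
          rw [mul_sup, span_singleton_mul_span_singleton, ← pow_succ]
        _ ≤ span {a ^ (n + 1)} ⊔ I ^ n * I ^ 2 :=
          sup_le_sup_left (mul_mono_left ((span_singleton_le_iff_mem _).2 (pow_mem_pow ha n))) _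
        _ = span {a ^ (n + 1)} ⊔ I ^ (n + 2) := by rw [← pow_add]
    calc I ^ (n + 1) = I ^ n * I := pow_succ I n
      _ ≤ (span {a ^ n} ⊔ I ^ (n + 1)) * I := mul_mono_left ih
      _ = span {a ^ n} * I ⊔ I ^ (n + 2) := by rw [sup_mul, ← pow_succ]
      _ ≤ span {a ^ (n + 1)} ⊔ I ^ (n + 2) := sup_le hspan le_sup_right

end

section

variable {R : Type*} [CommRing R]

@[simp]
lemma piHom_single (r : R) (m : ℤ) : piHom R (single r m) = m • r := by
  simp [piHom]

lemma piHom_of (r : R) : piHom R (of ℤ R r) = r := by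
  simp

lemma mem_Iid_iff {x : ZR R} : x ∈ Iid R ↔ piHom R x = 0 :=
  RingHom.mem_ker

lemma of_add_sub_of_sub_of_mem_Iid (a b : R) :
    of ℤ R (a + b) - of ℤ R a - of ℤ R b ∈ Iid R := by
  simp [mem_Iid_iff]

lemma of_piHom_sub_mem_Iid (x : ZR R) : of ℤ R (piHom R x) - x ∈ Iid R := by
  simp [mem_Iid_iff]

lemma AddMonoidHom.map_eq_zero_of_mem_Iid {M : Type*} [AddCommGroup M] (g : ZR R →+ M)
    (hg : ∀ a b : R, g (of ℤ R (a + b)) = g (of ℤ R a) + g (of ℤ R b))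
    {x : ZR R} (hx : x ∈ Iid R) : g x = 0 := by
  let f : R →+ M := AddMonoidHom.mk' (fun r => g (of ℤ R r)) hg
  have hgf : g = f.comp (piHom R).toAddMonoidHom := by
    ext r
    simp [f]
  rw [hgf, AddMonoidHom.comp_apply, RingHom.toAddMonoidHom_eq_coe, AddMonoidHom.coe_coe,
    mem_Iid_iff.1 hx, map_zero]

end

section

variable (p : ℕ) (R : Type*) [CommRing R] [CharP R p]

lemma natCast_pow_mul_mem_Iid_pow_succ (n : ℕ) {y : ZR R} (hy : y ∈ Iid R) :
    (p : ZR R) ^ n * y ∈ Iid R ^ (n + 1) := by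
  rw [pow_succ]
  exact Ideal.mul_mem_mul (Ideal.pow_mem_pow (p_mem_Iid p R) n) hy

lemma pnMap_eq_mk_iff {n : ℕ} (r : R) {x : ZR R} (hx : x ∈ Iid R ^ n) :
    pnMap p R n r = Submodule.Quotient.mk ⟨x, hx⟩ ↔
      (p : ZR R) ^ n * of ℤ R r - x ∈ Iid R ^ (n + 1) :=
  Submodule.Quotient.eq _

lemma pnMap_add (n : ℕ) (r s : R) : pnMap p R n (r + s) = pnMap p R n r + pnMap p R n s := by
  have hmem := add_mem (pow_mul_single_mem_Iid_pow p R n r) (pow_mul_single_mem_Iid_pow p R n s)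
  have hsum : pnMap p R n r + pnMap p R n s = Submodule.Quotient.mk ⟨_, hmem⟩ :=
    (Submodule.Quotient.mk_add _).symm
  rw [hsum, pnMap_eq_mk_iff]
  have hdiff : (p : ZR R) ^ n * of ℤ R (r + s) - (p ^ n * of ℤ R r + p ^ n * of ℤ R s)
      = p ^ n * (of ℤ R (r + s) - of ℤ R r - of ℤ R s) := by ring
  rw [hdiff]
  exact natCast_pow_mul_mem_Iid_pow_succ p R n (of_add_sub_of_sub_of_mem_Iid r s)

variable [hp : Fact p.Prime]

/-- Writing `a = α ^ p`, `b = β ^ p` and `e = [α + β] - [α] - [β] ∈ I`, one has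
`[a + b] = ([α] + [β] + e) ^ p ≡ [a] + [b] + e ^ p` modulo `p`, and `e ^ p ∈ I²`. -/
lemma of_add_sub_of_sub_of_mem_span_sup_sq (hsurj : Surjective fun x : R => x ^ p) (a b : R) :
    of ℤ R (a + b) - of ℤ R a - of ℤ R b ∈ Ideal.span {(p : ZR R)} ⊔ Iid R ^ 2 := by
  obtain ⟨α, rfl⟩ := hsurj a
  obtain ⟨β, rfl⟩ := hsurj b
  beta_reduce
  set x := of ℤ R α
  set y := of ℤ R β
  set e := of ℤ R (α + β) - x - y
  have he : e ∈ Iid R := of_add_sub_of_sub_of_mem_Iid α β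
  obtain ⟨c₁, hc₁⟩ := exists_add_pow_prime_eq hp.out (x + y) e
  obtain ⟨c₂, hc₂⟩ := exists_add_pow_prime_eq hp.out x y
  have hdecomp : of ℤ R (α ^ p + β ^ p) - of ℤ R (α ^ p) - of ℤ R (β ^ p)
      = p * ((x + y) * e * c₁ + x * y * c₂) + e ^ p := by
    have hsum : x + y + e = of ℤ R (α + β) := by ring
    rw [← add_pow_char, map_pow, map_pow, map_pow, ← hsum, hc₁, hc₂]
    ring
  rw [hdecomp]
  refine add_mem (Ideal.mem_sup_left (Ideal.mul_mem_right _ _ (Ideal.mem_span_singleton_self _)))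
    (Ideal.mem_sup_right ?_)
  exact Ideal.pow_le_pow_right hp.out.two_le (Ideal.pow_mem_pow he p)

lemma Iid_le_span_sup_sq (hsurj : Surjective fun x : R => x ^ p) :
    Iid R ≤ Ideal.span {(p : ZR R)} ⊔ Iid R ^ 2 := by
  set J := Ideal.span {(p : ZR R)} ⊔ Iid R ^ 2
  intro x hx
  rw [← Ideal.Quotient.eq_zero_iff_mem]
  refine (Ideal.Quotient.mk J).toAddMonoidHom.map_eq_zero_of_mem_Iid (fun a b => ?_) hx
  have := Ideal.Quotient.eq_zero_iff_mem.2 (of_add_sub_of_sub_of_mem_span_sup_sq p R hsurj a b)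
  rwa [map_sub, map_sub, sub_sub, sub_eq_zero] at this

lemma pnMap_surjective (hsurj : Surjective fun x : R => x ^ p) (n : ℕ) :
    Surjective (pnMap p R n) := by
  rintro ⟨⟨x, hx⟩⟩
  obtain ⟨u, hu, v, hv, rfl⟩ := Submodule.mem_sup.1 <|
    Ideal.pow_le_span_pow_sup_pow_succ (p_mem_Iid p R) (Iid_le_span_sup_sq p R hsurj) n hx
  obtain ⟨c, rfl⟩ := Ideal.mem_span_singleton'.1 hu
  refine ⟨piHom R c, (pnMap_eq_mk_iff p R _ _).2 ?_⟩
  have hdiff : (p : ZR R) ^ n * of ℤ R (piHom R c) - (c * p ^ n + v)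
      = p ^ n * (of ℤ R (piHom R c) - c) - v := by ring
  rw [hdiff]
  exact sub_mem (natCast_pow_mul_mem_Iid_pow_succ p R n (of_piHom_sub_mem_Iid c)) hv

end

namespace WittVector

variable {p : ℕ} [Fact p.Prime] {R : Type*} [CommRing R]

lemma mem_ker_truncate_one_iff {x : WittVector p R} :
    x ∈ RingHom.ker (truncate (p := p) 1) ↔ constantCoeff x = 0 := by
  rw [mem_ker_truncate, Nat.forall_lt_succ_right]
  simp

variable [CharP R p]

lemma ker_truncate_mul_ker_truncate_le (i j : ℕ) :
    RingHom.ker (truncate (p := p) (R := R) i) * RingHom.ker (truncate j) ≤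
      RingHom.ker (truncate (i + j)) := by
  refine Ideal.mul_le.2 fun x hx y hy => ?_
  rw [mem_ker_truncate] at hx hy ⊢
  rw [eq_iterate_verschiebung hx, eq_iterate_verschiebung hy, iterate_verschiebung_mul]
  exact fun k hk => iterate_verschiebung_coeff_eq_zero _ hk

lemma ker_truncate_one_pow_le (m : ℕ) :
    RingHom.ker (truncate (p := p) (R := R) 1) ^ m ≤ RingHom.ker (truncate m) := by
  induction m with
  | zero => exact fun x _ => (mem_ker_truncate 0 x).2 fun k hk => absurd hk k.not_lt_zero
  | succ m ih =>
    rw [pow_succ]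
    exact (Ideal.mul_mono_left ih).trans (ker_truncate_mul_ker_truncate_le m 1)

end WittVector

section

variable (p : ℕ) [hp : Fact p.Prime] (R : Type*) [CommRing R]

noncomputable def teichmullerLift : ZR R →+* WittVector p R :=
  (MonoidAlgebra.lift ℤ (WittVector p R) R (teichmuller p)).toRingHom

lemma teichmullerLift_of (r : R) : teichmullerLift p R (of ℤ R r) = teichmuller p r := by
  simp [teichmullerLift]

lemma constantCoeff_teichmullerLift (x : ZR R) :
    constantCoeff (teichmullerLift p R x) = piHom R x := by
  induction x using MonoidAlgebra.induction_on with
  | of r => rw [teichmullerLift_of, piHom_of, constantCoeff_apply, teichmuller_coeff_zero]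
  | add x y hx hy => rw [map_add, map_add, map_add, hx, hy]
  | smul m x hx => rw [map_zsmul, map_zsmul, map_zsmul, hx]

lemma map_teichmullerLift_Iid_pow_le [CharP R p] (m : ℕ) :
    (Iid R ^ m).map (teichmullerLift p R) ≤ RingHom.ker (truncate m) := by
  rw [Ideal.map_pow]
  refine (Ideal.pow_right_mono (Ideal.map_le_iff_le_comap.2 fun x hx => ?_) m).trans
    (ker_truncate_one_pow_le m)
  rw [Ideal.mem_comap, mem_ker_truncate_one_iff, constantCoeff_teichmullerLift]
  exact hx

lemma pnMap_injective [CharP R p] (hinj : Injective fun x : R => x ^ p) (n : ℕ) :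
    Injective (pnMap p R n) := by
  intro r s hrs
  have hmem : (p : ZR R) ^ n * of ℤ R r - p ^ n * of ℤ R s ∈ Iid R ^ (n + 1) :=
    (pnMap_eq_mk_iff p R r _).1 hrs
  have hker := map_teichmullerLift_Iid_pow_le p R (n + 1) (Ideal.mem_map_of_mem _ hmem)
  have himage : teichmullerLift p R ((p : ZR R) ^ n * of ℤ R r - p ^ n * of ℤ R s) =
      (teichmuller p r - teichmuller p s) * p ^ n := by
    simp only [map_sub, map_mul, map_pow, map_natCast, teichmullerLift_of]
    ring
  have hpow : (r - s) ^ p ^ n = 0 := by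
    rw [himage, mem_ker_truncate] at hker
    have := hker (0 + n) (by omega)
    rwa [mul_pow_charP_coeff_succ, ← constantCoeff_apply, map_sub, constantCoeff_apply,
      constantCoeff_apply, teichmuller_coeff_zero, teichmuller_coeff_zero] at this
  have hinj_pow : Injective fun x : R => x ^ p ^ n := pow_iterate (M := R) p n ▸ hinj.iterate n
  rw [← sub_eq_zero]
  exact hinj_pow (hpow.trans (zero_pow (pow_ne_zero n hp.out.ne_zero)).symm)

end

/-- Let `p` be a prime, `R` a perfect `𝔽_p`-algebra and `n ≥ 0`. The map
`R → I^n/I^(n+1)` sending `r` to the class of `p^n·[r]` is bijective and additive; hence it is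
an isomorphism of additive groups `R ≅ I^n/I^(n+1)`. -/
theorem statement7 (p : ℕ) [Fact p.Prime] (R : Type*) [CommRing R] [CharP R p]
    (hperf : Function.Bijective fun x : R => x ^ p) (n : ℕ) :
    Function.Bijective (pnMap p R n) ∧
    ∀ r s : R, pnMap p R n (r + s) = pnMap p R n r + pnMap p R n s :=
  ⟨⟨pnMap_injective p R hperf.1 n, pnMap_surjective p R hperf.2 n⟩, pnMap_add p R n⟩
end

section
/- Let p be a prime, R a perfect 𝔽_p-algebra, and A a commutative ring equipped with a decreasing sequence of ideals 𝔞₁ ⊇ 𝔞₂ ⊇ … such that 𝔞_i·𝔞_j ⊆ 𝔞_{i+j} for all i, j ≥ 1, such that the canonical map A → lim_ν A/𝔞_ν is bijective, together with a surjective ring homomorphism π_A : A → R with kernel 𝔞₁ (so A is a p-ring with perfect residue algebra R). Then there exists a unique ring homomorphism α̂ : C(R) → A with π_A ∘ α̂ = π̄, where π̄ : C(R) → R is the canonical projection induced by π. -/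
/-!
Perfectness of `R` makes the additivity defects `[x + y] - [x] - [y]` in `ℤR` into `p`-th powers
of elements of `I` modulo `p`, so `I ⊆ I ^ ν + (p)` for every `ν`; by successive approximation the
kernel of `C(R) → ℤR ⧸ I ^ ν` is then `p ^ ν C(R)`.

Existence: the Teichmüller map `τ r = lim_n ℓ(r ^ p ^ (-n)) ^ p ^ n` (for arbitrary lifts `ℓ`
through `π_A`) is multiplicative, so it induces `α : ℤR → A` with `α (I ^ ν) ⊆ 𝔞_ν`, which extends
to the completion. Uniqueness: a lift `δ` sends `[r] = [r ^ p ^ (-n)] ^ p ^ n` to an element with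
`p ^ n`-th roots lifting `r ^ p ^ (-n)` for all `n`, which forces `δ [r] = τ r`. Two lifts thus
agree on `ℤR`, and on `p ^ ν C(R)` their values differ by an element of `(p) ^ ν ⊆ 𝔞_ν`.
-/

set_option synthInstance.maxHeartbeats 1000000
set_option maxHeartbeats 1000000

open MonoidAlgebra

/-- The inverse limit `lim_ν A⧸I^ν` realized as a subring of the product `Π ν, A⧸I^ν`
(families compatible under the canonical factor maps). -/
def Clim (A : Type*) [CommRing A] (I : Ideal A) : Subring (Π ν : ℕ, A ⧸ I ^ ν) where
  carrier := { x | ∀ ⦃m ν : ℕ⦄ (h : m ≤ ν),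
    Ideal.Quotient.factor (Ideal.pow_le_pow_right h) (x ν) = x m }
  zero_mem' := by intro m ν h; simp
  one_mem' := by intro m ν h; simp
  add_mem' := by intro x y hx hy m ν h; simp only [Pi.add_apply, map_add, hx h, hy h]
  mul_mem' := by intro x y hx hy m ν h; simp only [Pi.mul_apply, map_mul, hx h, hy h]
  neg_mem' := by intro x hx m ν h; simp only [Pi.neg_apply, map_neg, hx h]

/-- The projection of the completion `lim_ν A⧸I^ν` onto its `ν`-th level `A⧸I^ν`. -/
def Ceval (A : Type*) [CommRing A] (I : Ideal A) (ν : ℕ) : Clim A I →+* A ⧸ I ^ ν :=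
  (Pi.evalRingHom _ ν).comp (Clim A I).subtype

/-- The canonical map `A → lim_ν A⧸I^ν`. -/
def CofRingHom (A : Type*) [CommRing A] (I : Ideal A) : A →+* Clim A I where
  toFun a := ⟨fun ν => Ideal.Quotient.mk _ a, fun _ _ _ => Ideal.Quotient.factor_mk _ _⟩
  map_one' := rfl
  map_mul' _ _ := rfl
  map_zero' := rfl
  map_add' _ _ := rfl

/-- `C(R)`: the `I`-adic completion of `ℤR`. -/
noncomputable abbrev CR (R : Type*) [CommRing R] : Type _ := Clim (ZR R) (Iid R)

/-- The canonical projection `π̄ : C(R) → R` induced by `π`. -/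
noncomputable def CtoR (R : Type*) [CommRing R] : CR R →+* R :=
  (Ideal.Quotient.lift (Iid R) (piHom R) (fun _ ha => ha)).comp
    (((Ideal.quotEquivOfEq (pow_one (Iid R))).toRingHom).comp (Ceval (ZR R) (Iid R) 1))


namespace Ideal

variable {S : Type*} [CommRing S]

theorem sup_pow_le_sup_pow (X Y : Ideal S) : ∀ a : ℕ, (X ⊔ Y) ^ a ≤ X ⊔ Y ^ a
  | 0 => by simp
  | a + 1 =>
    calc (X ⊔ Y) ^ (a + 1) = (X ⊔ Y) * (X ⊔ Y) ^ a := pow_succ' _ _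
      _ ≤ (X ⊔ Y) * (X ⊔ Y ^ a) := mul_mono_right (sup_pow_le_sup_pow X Y a)
      _ = X * (X ⊔ Y ^ a) ⊔ (Y * X ⊔ Y ^ (a + 1)) := by rw [sup_mul, mul_sup Y, pow_succ']
      _ ≤ X ⊔ Y ^ (a + 1) :=
        sup_le (mul_le_left.trans le_sup_left) (sup_le_sup_right mul_le_right _)

theorem le_pow_sup_of_le_sq_sup {I K : Ideal S} (h : I ≤ I ^ 2 ⊔ K) :
    ∀ ν : ℕ, I ≤ I ^ ν ⊔ K
  | 0 => by simp
  | ν + 1 =>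
    calc I ≤ I * I ⊔ K := by rwa [← sq]
      _ ≤ I * (I ^ ν ⊔ K) ⊔ K :=
        sup_le_sup_right (mul_mono_right (le_pow_sup_of_le_sq_sup h ν)) _
      _ ≤ I ^ (ν + 1) ⊔ K := by
        rw [mul_sup, ← pow_succ', sup_assoc]
        exact sup_le_sup_left (sup_le mul_le_right le_rfl) _

theorem pow_le_pow_sup_span_pow {I : Ideal S} {t : S} (h : I ≤ I ^ 2 ⊔ span {t}) (a ν : ℕ) :
    I ^ a ≤ I ^ ν ⊔ span {t ^ a} :=
  calc I ^ a ≤ (I ^ ν ⊔ span {t}) ^ a := pow_right_mono (le_pow_sup_of_le_sq_sup h ν) a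
    _ ≤ I ^ ν ⊔ span {t ^ a} := by
      rw [← span_singleton_pow]; exact sup_pow_le_sup_pow _ _ a

theorem sub_mem_of_forall_succ_sub_mem (I : Ideal S) {f : ℕ → S} {m : ℕ}
    (h : ∀ ν, m ≤ ν → f (ν + 1) - f ν ∈ I) {ν : ℕ} (hν : m ≤ ν) : f ν - f m ∈ I := by
  induction ν, hν using Nat.le_induction with
  | base => simp
  | succ ν hmν ih => simpa using I.add_mem (h ν hmν) ih

end Ideal

theorem add_pow_prime_sub_mem_span {S : Type*} [CommRing S] {p : ℕ} (hp : p.Prime) (x y : S) :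
    (x + y) ^ p - x ^ p - y ^ p ∈ Ideal.span {(p : S)} := by
  obtain ⟨r, hr⟩ := exists_add_pow_prime_eq hp x y
  exact Ideal.mem_span_singleton'.mpr ⟨x * y * r, by rw [hr]; ring⟩

-- `A → lim_ν A/𝔞_ν` is injective (`eq_zero_of_forall_mem`) and surjective (`exists_limit`);
-- the ideal `𝔞 0` plays no role.
structure IsCompleteFiltration {A : Type*} [CommRing A] (𝔞 : ℕ → Ideal A) : Prop where
  succ_le : ∀ i, 1 ≤ i → 𝔞 (i + 1) ≤ 𝔞 i
  mul_le : ∀ i j, 1 ≤ i → 1 ≤ j → 𝔞 i * 𝔞 j ≤ 𝔞 (i + j)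
  eq_zero_of_forall_mem : ∀ x : A, (∀ ν, 1 ≤ ν → x ∈ 𝔞 ν) → x = 0
  exists_limit : ∀ f : ℕ → A, (∀ m ν, 1 ≤ m → m ≤ ν → f ν - f m ∈ 𝔞 m) →
    ∃ L : A, ∀ m, 1 ≤ m → L - f m ∈ 𝔞 m

namespace IsCompleteFiltration

variable {A : Type*} [CommRing A] {𝔞 : ℕ → Ideal A}

theorem antitone (h𝔞 : IsCompleteFiltration 𝔞) {i j : ℕ} (hi : 1 ≤ i) (hij : i ≤ j) :
    𝔞 j ≤ 𝔞 i := by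
  induction j, hij using Nat.le_induction with
  | base => exact le_rfl
  | succ j hij ih => exact (h𝔞.succ_le j (hi.trans hij)).trans ih

theorem pow_le (h𝔞 : IsCompleteFiltration 𝔞) {n : ℕ} (hn : 1 ≤ n) : 𝔞 1 ^ n ≤ 𝔞 n := by
  induction n, hn using Nat.le_induction with
  | base => rw [pow_one]
  | succ n hn ih => exact (Ideal.mul_mono_left ih).trans (h𝔞.mul_le n 1 hn le_rfl)

theorem eq_of_forall_sub_mem (h𝔞 : IsCompleteFiltration 𝔞) {a b : A}
    (h : ∀ m, 1 ≤ m → a - b ∈ 𝔞 m) : a = b :=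
  sub_eq_zero.mp (h𝔞.eq_zero_of_forall_mem _ h)

theorem eq_of_forall_sub_mem_of_sub_mem (h𝔞 : IsCompleteFiltration 𝔞) {a b : A} {c : ℕ → A}
    (ha : ∀ m, 1 ≤ m → a - c m ∈ 𝔞 m) (hb : ∀ m, 1 ≤ m → b - c m ∈ 𝔞 m) : a = b :=
  h𝔞.eq_of_forall_sub_mem fun m hm => by simpa using (𝔞 m).sub_mem (ha m hm) (hb m hm)

theorem exists_limit_of_succ_sub_mem (h𝔞 : IsCompleteFiltration 𝔞) {f : ℕ → A}
    (hf : ∀ ν, 1 ≤ ν → f (ν + 1) - f ν ∈ 𝔞 ν) :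
    ∃ L : A, ∀ m, 1 ≤ m → L - f m ∈ 𝔞 m :=
  h𝔞.exists_limit f fun _ _ hm hmν => Ideal.sub_mem_of_forall_succ_sub_mem _
    (fun ν hν => h𝔞.antitone hm hν (hf ν (hm.trans hν))) hmν

theorem sub_pow_pow_mem (h𝔞 : IsCompleteFiltration 𝔞) {p : ℕ} (hp : (p : A) ∈ 𝔞 1) {a b : A}
    (hab : a - b ∈ 𝔞 1) (n : ℕ) : a ^ p ^ n - b ^ p ^ n ∈ 𝔞 (n + 1) := by
  induction n with
  | zero => simpa using hab
  | succ n ih =>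
    have h := SModEq.sub_mem.mp <|
      (SModEq.sub_mem.mpr ih).pow_mul_of_le hp (h𝔞.antitone le_rfl (by omega))
    rw [← pow_mul, ← pow_mul, ← pow_succ] at h
    exact h𝔞.mul_le _ 1 (by omega) le_rfl h

end IsCompleteFiltration

section Frobenius

variable {R : Type*} [CommRing R] {p : ℕ} [ExpChar R p] [PerfectRing R p]

theorem pow_iterateFrobeniusEquiv_symm (n : ℕ) (x : R) :
    (iterateFrobeniusEquiv R p n).symm x ^ p ^ n = x :=
  (iterateFrobeniusEquiv R p n).apply_symm_apply x

theorem pow_iterateFrobeniusEquiv_symm_succ (n : ℕ) (x : R) :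
    (iterateFrobeniusEquiv R p (n + 1)).symm x ^ p = (iterateFrobeniusEquiv R p n).symm x := by
  rw [iterateFrobeniusEquiv_symm_add_apply, ← map_pow]
  congr 1
  simp

end Frobenius

theorem natCast_mem_of_ker_eq {R A : Type*} [CommRing R] [CommRing A] (p : ℕ) [CharP R p]
    {πA : A →+* R} {I : Ideal A} (hker : RingHom.ker πA = I) : (p : A) ∈ I := by
  rw [← hker, RingHom.mem_ker, map_natCast, CharP.cast_eq_zero]

structure IsResidueMap {A R : Type*} [CommRing A] [CommRing R] (𝔞 : ℕ → Ideal A)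
    (πA : A →+* R) : Prop extends IsCompleteFiltration 𝔞 where
  surjective : Function.Surjective πA
  ker_eq : RingHom.ker πA = 𝔞 1

namespace IsResidueMap

variable {p : ℕ} {R : Type*} [CommRing R] {A : Type*} [CommRing A] {𝔞 : ℕ → Ideal A}
  {πA : A →+* R}

theorem pow_sub_pow_mem_of_map_eq [CharP R p] (hA : IsResidueMap 𝔞 πA) {a b : A}
    (hab : πA a = πA b) (n : ℕ) : a ^ p ^ n - b ^ p ^ n ∈ 𝔞 (n + 1) :=
  hA.sub_pow_pow_mem (natCast_mem_of_ker_eq p hA.ker_eq)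
    (hA.ker_eq ▸ (RingHom.sub_mem_ker_iff πA).mpr hab) n

variable [Fact p.Prime] [CharP R p] [PerfectRing R p]

theorem exists_teichmuller_limit (hA : IsResidueMap 𝔞 πA) (r : R) : ∃ L : A, ∀ m, 1 ≤ m →
    L - Function.surjInv hA.surjective ((iterateFrobeniusEquiv R p m).symm r) ^ p ^ m ∈ 𝔞 m := by
  refine hA.exists_limit_of_succ_sub_mem fun ν hν => hA.antitone hν (Nat.le_succ ν) ?_
  rw [pow_succ', pow_mul]
  refine hA.pow_sub_pow_mem_of_map_eq ?_ ν
  rw [map_pow, Function.surjInv_eq hA.surjective, Function.surjInv_eq hA.surjective,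
    pow_iterateFrobeniusEquiv_symm_succ]

variable (p) in
noncomputable def teichmullerFun (hA : IsResidueMap 𝔞 πA) (r : R) : A :=
  (hA.exists_teichmuller_limit (p := p) r).choose

theorem teichmullerFun_sub_pow_mem (hA : IsResidueMap 𝔞 πA) {r : R} {n : ℕ} {c : A}
    (hc : πA c = (iterateFrobeniusEquiv R p n).symm r) :
    hA.teichmullerFun p r - c ^ p ^ n ∈ 𝔞 (n + 1) := by
  set d := Function.surjInv hA.surjective ((iterateFrobeniusEquiv R p (n + 1)).symm r)
  have hlim : hA.teichmullerFun p r - (d ^ p) ^ p ^ n ∈ 𝔞 (n + 1) := by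
    rw [← pow_mul, ← pow_succ']
    exact (hA.exists_teichmuller_limit r).choose_spec (n + 1) (by omega)
  have hd : πA (d ^ p) = πA c := by
    rw [map_pow, Function.surjInv_eq hA.surjective, pow_iterateFrobeniusEquiv_symm_succ, hc]
  simpa using (𝔞 (n + 1)).add_mem hlim (hA.pow_sub_pow_mem_of_map_eq hd n)

theorem eq_teichmullerFun (hA : IsResidueMap 𝔞 πA) {a : A} {r : R}
    (h : ∀ n, ∃ c, πA c = (iterateFrobeniusEquiv R p n).symm r ∧ a - c ^ p ^ n ∈ 𝔞 (n + 1)) :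
    a = hA.teichmullerFun p r := by
  choose c hc ha using h
  exact hA.eq_of_forall_sub_mem_of_sub_mem (c := fun m => c m ^ p ^ m)
    (fun m hm => hA.antitone hm (by omega) (ha m))
    (fun m hm => hA.antitone hm (by omega) (hA.teichmullerFun_sub_pow_mem (hc m)))

variable (p) in
noncomputable def teichmuller (hA : IsResidueMap 𝔞 πA) : R →* A where
  toFun := hA.teichmullerFun p
  map_one' := (hA.eq_teichmullerFun fun n => ⟨1, by simp⟩).symm
  map_mul' r s := by
    refine (hA.eq_teichmullerFun fun n => ?_).symm
    have hr := Function.surjInv_eq hA.surjective ((iterateFrobeniusEquiv R p n).symm r)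
    have hs := Function.surjInv_eq hA.surjective ((iterateFrobeniusEquiv R p n).symm s)
    set cr := Function.surjInv hA.surjective ((iterateFrobeniusEquiv R p n).symm r)
    set cs := Function.surjInv hA.surjective ((iterateFrobeniusEquiv R p n).symm s)
    refine ⟨cr * cs, by rw [map_mul, hr, hs, map_mul], ?_⟩
    have : hA.teichmullerFun p r * hA.teichmullerFun p s - (cr * cs) ^ p ^ n =
        hA.teichmullerFun p r * (hA.teichmullerFun p s - cs ^ p ^ n) +
          cs ^ p ^ n * (hA.teichmullerFun p r - cr ^ p ^ n) := by ring
    rw [this]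
    exact add_mem (Ideal.mul_mem_left _ _ (hA.teichmullerFun_sub_pow_mem hs))
      (Ideal.mul_mem_left _ _ (hA.teichmullerFun_sub_pow_mem hr))

theorem map_teichmuller (hA : IsResidueMap 𝔞 πA) (r : R) : πA (hA.teichmuller p r) = r := by
  have hc : πA (Function.surjInv hA.surjective r) = (iterateFrobeniusEquiv R p 0).symm r := by
    simp [Function.surjInv_eq hA.surjective]
  have h := hA.teichmullerFun_sub_pow_mem hc
  rwa [pow_zero, pow_one, ← hA.ker_eq, RingHom.sub_mem_ker_iff,
    Function.surjInv_eq hA.surjective] at h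

theorem eq_teichmuller_of_pow_eq (hA : IsResidueMap 𝔞 πA) {a : A} {r : R}
    (h : ∀ n, ∃ c, πA c = (iterateFrobeniusEquiv R p n).symm r ∧ c ^ p ^ n = a) :
    a = hA.teichmuller p r :=
  hA.eq_teichmullerFun fun n =>
    let ⟨c, hc, hca⟩ := h n; ⟨c, hc, by rw [hca, sub_self]; exact zero_mem _⟩

end IsResidueMap

namespace ZR

variable {R : Type*} [CommRing R]

theorem piHom_of (r : R) : piHom R (of ℤ R r) = r := by
  simp [piHom]

theorem ringHom_ext {B : Type*} [Semiring B] {f g : ZR R →+* B}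
    (h : ∀ r : R, f (of ℤ R r) = g (of ℤ R r)) : f = g :=
  MonoidAlgebra.ringHom_ext' (RingHom.ext_int _ _) (MonoidHom.ext h)

theorem natCast_mem_Iid (p : ℕ) [CharP R p] : (p : ZR R) ∈ Iid R := by
  rw [Iid, RingHom.mem_ker, map_natCast, CharP.cast_eq_zero]

theorem Iid_le_of_forall_add_mem {J : Ideal (ZR R)}
    (h : ∀ x y : R, of ℤ R (x + y) - of ℤ R x - of ℤ R y ∈ J) : Iid R ≤ J := by
  let σ : R →+* ZR R ⧸ J :=
    RingHom.mk' ((Ideal.Quotient.mk J : ZR R →* ZR R ⧸ J).comp (of ℤ R)) fun x y => by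
      simpa [sub_sub, sub_eq_zero] using Ideal.Quotient.eq_zero_iff_mem.mpr (h x y)
  have hσ : Ideal.Quotient.mk J = σ.comp (piHom R) := ringHom_ext fun r => by
    rw [RingHom.comp_apply, piHom_of]; rfl
  intro z hz
  rw [← Ideal.Quotient.eq_zero_iff_mem, hσ, RingHom.comp_apply, RingHom.mem_ker.mp hz, map_zero]

theorem Iid_le_pow_sup_span (p : ℕ) [Fact p.Prime] [CharP R p] [PerfectRing R p] :
    Iid R ≤ Iid R ^ p ⊔ Ideal.span {(p : ZR R)} := by
  have hp : p.Prime := Fact.out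
  refine Iid_le_of_forall_add_mem fun x y => ?_
  obtain ⟨u, rfl⟩ := surjective_frobenius R p x
  obtain ⟨v, rfl⟩ := surjective_frobenius R p y
  set a := of ℤ R u + of ℤ R v
  set d := of ℤ R (u + v) - a
  have hd : d ∈ Iid R := by
    rw [Iid, RingHom.mem_ker, map_sub, map_add (piHom R), piHom_of, piHom_of, piHom_of, sub_self]
  have : of ℤ R (frobenius R p u + frobenius R p v) - of ℤ R (frobenius R p u) -
      of ℤ R (frobenius R p v) =
      d ^ p + (((a + d) ^ p - a ^ p - d ^ p) + (a ^ p - of ℤ R u ^ p - of ℤ R v ^ p)) := by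
    simp only [frobenius_def, ← add_pow_char, map_pow, a, d]
    ring
  rw [this]
  exact Submodule.add_mem_sup (Ideal.pow_mem_pow hd p)
    (add_mem (add_pow_prime_sub_mem_span hp _ _) (add_pow_prime_sub_mem_span hp _ _))

theorem Iid_le_sq_sup_span (p : ℕ) [Fact p.Prime] [CharP R p] [PerfectRing R p] :
    Iid R ≤ Iid R ^ 2 ⊔ Ideal.span {(p : ZR R)} :=
  (Iid_le_pow_sup_span p).trans
    (sup_le_sup_right (Ideal.pow_le_pow_right (Fact.out : p.Prime).two_le) _)

end ZR

namespace Clim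

variable {B : Type*} [CommRing B] {J : Ideal B}

theorem ext {x y : Clim B J} (h : ∀ ν, Ceval B J ν x = Ceval B J ν y) : x = y :=
  Subtype.ext (funext h)

theorem factor_Ceval (x : Clim B J) {m ν : ℕ} (h : m ≤ ν) :
    Ideal.Quotient.factor (Ideal.pow_le_pow_right h) (Ceval B J ν x) = Ceval B J m x :=
  x.2 h

theorem Ceval_CofRingHom (ν : ℕ) (b : B) :
    Ceval B J ν (CofRingHom B J b) = Ideal.Quotient.mk _ b :=
  rfl

theorem Ceval_eq_zero_of_le {x : Clim B J} {m ν : ℕ} (h : m ≤ ν) (hx : Ceval B J ν x = 0) :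
    Ceval B J m x = 0 := by
  rw [← factor_Ceval x h, hx, map_zero]

def ofCauchy (s : ℕ → B) (hs : ∀ K, s (K + 1) - s K ∈ J ^ K) : Clim B J :=
  ⟨fun ν => Ideal.Quotient.mk _ (s ν), fun m _ h => by
    rw [Ideal.Quotient.factor_mk, Ideal.Quotient.eq]
    exact Ideal.sub_mem_of_forall_succ_sub_mem _ (fun K hK => Ideal.pow_le_pow_right hK (hs K)) h⟩

theorem Ceval_ofCauchy (s : ℕ → B) (hs : ∀ K, s (K + 1) - s K ∈ J ^ K) (ν : ℕ) :
    Ceval B J ν (ofCauchy s hs) = Ideal.Quotient.mk _ (s ν) :=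
  rfl

theorem exists_Ceval_succ_eq_zero {t : B} (hJ : J ≤ J ^ 2 ⊔ Ideal.span {t}) (x : Clim B J)
    {n K : ℕ} {σ : B} (hσ : Ceval B J (n + K) (x - CofRingHom B J (t ^ n * σ)) = 0) :
    ∃ s : B, Ceval B J (n + K + 1) (x - CofRingHom B J (t ^ n * (σ + t ^ K * s))) = 0 := by
  set y := x - CofRingHom B J (t ^ n * σ)
  obtain ⟨h, hh⟩ := Ideal.Quotient.mk_surjective (Ceval B J (n + K + 1) y)
  have hmem : h ∈ J ^ (n + K) := by
    rw [← Ideal.Quotient.eq_zero_iff_mem, ← Ideal.Quotient.factor_mk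
      (Ideal.pow_le_pow_right (Nat.le_succ _)), hh, factor_Ceval y (Nat.le_succ _), hσ]
  obtain ⟨q, hq, r, hr, rfl⟩ :=
    Submodule.mem_sup.mp (Ideal.pow_le_pow_sup_span_pow hJ (n + K) (n + K + 1) hmem)
  obtain ⟨s, rfl⟩ := Ideal.mem_span_singleton'.mp hr
  refine ⟨s, ?_⟩
  have : x - CofRingHom B J (t ^ n * (σ + t ^ K * s)) = y - CofRingHom B J (s * t ^ (n + K)) := by
    simp only [y, map_mul, map_add, map_pow]; ring
  rw [this, map_sub, ← hh, Ceval_CofRingHom, ← map_sub, add_sub_cancel_right,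
    Ideal.Quotient.eq_zero_iff_mem]
  exact hq

theorem exists_eq_pow_mul_of_Ceval_eq_zero {t : B} (ht : t ∈ J)
    (hJ : J ≤ J ^ 2 ⊔ Ideal.span {t}) {x : Clim B J} {n : ℕ} (hx : Ceval B J n x = 0) :
    ∃ w, x = CofRingHom B J t ^ n * w := by
  choose! s hs using fun (K : ℕ) (σ : B)
    (h : Ceval B J (n + K) (x - CofRingHom B J (t ^ n * σ)) = 0) =>
    exists_Ceval_succ_eq_zero hJ x h
  let σ : ℕ → B := fun K => Nat.rec 0 (fun K σK => σK + t ^ K * s K σK) K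
  have hσ : ∀ K, Ceval B J (n + K) (x - CofRingHom B J (t ^ n * σ K)) = 0 := by
    intro K
    induction K with
    | zero => simpa [σ] using hx
    | succ K ih => exact hs K (σ K) ih
  have hcauchy : ∀ K, σ (K + 1) - σ K ∈ J ^ K := fun K => by
    rw [show σ (K + 1) = σ K + t ^ K * s K (σ K) from rfl, add_sub_cancel_left]
    exact Ideal.mul_mem_right _ _ (Ideal.pow_mem_pow ht K)
  refine ⟨ofCauchy σ hcauchy, ext fun ν => ?_⟩
  have h := Ceval_eq_zero_of_le (Nat.le_add_left ν n) (hσ ν)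
  rw [map_sub, sub_eq_zero] at h
  rw [h]
  simp only [map_mul, map_pow, Ceval_ofCauchy, Ceval_CofRingHom]

variable {A : Type*} [CommRing A] {𝔞 : ℕ → Ideal A}

theorem map_sub_mem_of_mk_eq (h𝔞 : IsCompleteFiltration 𝔞) {f : B →+* A}
    (hf : ∀ z ∈ J, f z ∈ 𝔞 1) {m : ℕ} (hm : 1 ≤ m) {z z' : B}
    (hz : Ideal.Quotient.mk (J ^ m) z = Ideal.Quotient.mk (J ^ m) z') : f z - f z' ∈ 𝔞 m := by
  have hmap : (J ^ m).map f ≤ 𝔞 m := by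
    rw [Ideal.map_pow]
    exact (Ideal.pow_right_mono (Ideal.map_le_iff_le_comap.mpr hf) m).trans (h𝔞.pow_le hm)
  rw [← map_sub]
  exact hmap (Ideal.mem_map_of_mem f (Ideal.Quotient.eq.mp hz))

theorem exists_lift_limit (h𝔞 : IsCompleteFiltration 𝔞) {f : B →+* A}
    (hf : ∀ z ∈ J, f z ∈ 𝔞 1) (x : Clim B J) :
    ∃ L : A, ∀ m, 1 ≤ m → L - f (Ceval B J m x).out ∈ 𝔞 m :=
  h𝔞.exists_limit _ fun m ν hm hmν => map_sub_mem_of_mk_eq h𝔞 hf hm <| by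
    rw [← Ideal.Quotient.factor_mk (Ideal.pow_le_pow_right hmν), Ideal.Quotient.mk_out,
      Ideal.Quotient.mk_out, factor_Ceval x hmν]

noncomputable def liftFun (h𝔞 : IsCompleteFiltration 𝔞) {f : B →+* A}
    (hf : ∀ z ∈ J, f z ∈ 𝔞 1) (x : Clim B J) : A :=
  (exists_lift_limit h𝔞 hf x).choose

theorem liftFun_sub_mem (h𝔞 : IsCompleteFiltration 𝔞) {f : B →+* A}
    (hf : ∀ z ∈ J, f z ∈ 𝔞 1) {x : Clim B J} {m : ℕ} (hm : 1 ≤ m) {z : B}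
    (hz : Ideal.Quotient.mk _ z = Ceval B J m x) :
    liftFun h𝔞 hf x - f z ∈ 𝔞 m := by
  have h := (𝔞 m).add_mem ((exists_lift_limit h𝔞 hf x).choose_spec m hm)
    (map_sub_mem_of_mk_eq h𝔞 hf hm (z := (Ceval B J m x).out) (z' := z) (by rw [hz]; simp))
  rwa [sub_add_sub_cancel] at h

noncomputable def lift (h𝔞 : IsCompleteFiltration 𝔞) (f : B →+* A)
    (hf : ∀ z ∈ J, f z ∈ 𝔞 1) : Clim B J →+* A where
  toFun := liftFun h𝔞 hf
  map_one' := h𝔞.eq_of_forall_sub_mem_of_sub_mem (c := fun _ => f 1)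
    (fun _ hm => liftFun_sub_mem h𝔞 hf hm (map_one _)) (fun _ _ => by simp)
  map_zero' := h𝔞.eq_of_forall_sub_mem_of_sub_mem (c := fun _ => f 0)
    (fun _ hm => liftFun_sub_mem h𝔞 hf hm (map_zero _)) (fun _ _ => by simp)
  map_mul' x y := h𝔞.eq_of_forall_sub_mem_of_sub_mem
    (c := fun m => f ((Ceval B J m x).out * (Ceval B J m y).out))
    (fun _ hm => liftFun_sub_mem h𝔞 hf hm (by simp))
    (fun m hm => by
      have hx := liftFun_sub_mem h𝔞 hf hm (Ideal.Quotient.mk_out (Ceval B J m x))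
      have hy := liftFun_sub_mem h𝔞 hf hm (Ideal.Quotient.mk_out (Ceval B J m y))
      rw [map_mul]
      convert add_mem (Ideal.mul_mem_left _ (liftFun h𝔞 hf x) hy)
        (Ideal.mul_mem_left _ (f (Ceval B J m y).out) hx) using 1
      ring)
  map_add' x y := h𝔞.eq_of_forall_sub_mem_of_sub_mem
    (c := fun m => f ((Ceval B J m x).out + (Ceval B J m y).out))
    (fun _ hm => liftFun_sub_mem h𝔞 hf hm (by simp))
    (fun m hm => by
      have hx := liftFun_sub_mem h𝔞 hf hm (Ideal.Quotient.mk_out (Ceval B J m x))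
      have hy := liftFun_sub_mem h𝔞 hf hm (Ideal.Quotient.mk_out (Ceval B J m y))
      rw [map_add]
      convert add_mem hx hy using 1
      ring)

theorem lift_sub_mem (h𝔞 : IsCompleteFiltration 𝔞) {f : B →+* A}
    (hf : ∀ z ∈ J, f z ∈ 𝔞 1) {x : Clim B J} {m : ℕ} (hm : 1 ≤ m) {z : B}
    (hz : Ideal.Quotient.mk _ z = Ceval B J m x) :
    lift h𝔞 f hf x - f z ∈ 𝔞 m :=
  liftFun_sub_mem h𝔞 hf hm hz

theorem ringHom_ext (h𝔞 : IsCompleteFiltration 𝔞) {t : B} (ht : t ∈ J)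
    (hJ : J ≤ J ^ 2 ⊔ Ideal.span {t}) {γ δ : Clim B J →+* A}
    (hγδ : γ.comp (CofRingHom B J) = δ.comp (CofRingHom B J))
    (hγt : γ (CofRingHom B J t) ∈ 𝔞 1) : γ = δ := by
  have hι : ∀ b, γ (CofRingHom B J b) = δ (CofRingHom B J b) := RingHom.congr_fun hγδ
  ext x
  refine h𝔞.eq_of_forall_sub_mem fun n hn => ?_
  obtain ⟨w, hw⟩ : ∃ w, x - CofRingHom B J (Ceval B J n x).out = CofRingHom B J t ^ n * w :=
    exists_eq_pow_mul_of_Ceval_eq_zero ht hJ (by simp [Ceval_CofRingHom])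
  rw [sub_eq_iff_eq_add] at hw
  have hdiff : γ x - δ x = γ (CofRingHom B J t) ^ n * (γ w - δ w) := by
    rw [hw]; simp only [map_add, map_mul, map_pow, hι]; ring
  rw [hdiff]
  exact Ideal.mul_mem_right _ _ (h𝔞.pow_le hn (Ideal.pow_mem_pow hγt n))

end Clim

theorem CtoR_eq_piHom {R : Type*} [CommRing R] {x : CR R} {z : ZR R}
    (hz : Ideal.Quotient.mk _ z = Ceval (ZR R) (Iid R) 1 x) : CtoR R x = piHom R z := by
  rw [CtoR, RingHom.comp_apply, RingHom.comp_apply, ← hz]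
  exact Ideal.Quotient.lift_mk _ _ _

section CompletionLift

variable {p : ℕ} {R : Type*} [CommRing R] {A : Type*} [CommRing A] {𝔞 : ℕ → Ideal A}
  {πA : A →+* R}

theorem map_lift_eq_CtoR (h𝔞 : IsCompleteFiltration 𝔞) (hker : RingHom.ker πA = 𝔞 1)
    {α : ZR R →+* A} (hα : πA.comp α = piHom R) (hαI : ∀ z ∈ Iid R, α z ∈ 𝔞 1)
    (x : CR R) : πA (Clim.lift h𝔞 α hαI x) = CtoR R x := by
  obtain ⟨z, hz⟩ := Ideal.Quotient.mk_surjective (Ceval (ZR R) (Iid R) 1 x)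
  have h := Clim.lift_sub_mem h𝔞 hαI le_rfl hz
  rw [← hker, RingHom.sub_mem_ker_iff] at h
  rw [h, ← RingHom.comp_apply, hα, CtoR_eq_piHom hz]

theorem comp_CofRingHom_eq_teichmuller [Fact p.Prime] [CharP R p] [PerfectRing R p]
    (hA : IsResidueMap 𝔞 πA) {δ : CR R →+* A} (hδ : ∀ x, πA (δ x) = CtoR R x) :
    δ.comp (CofRingHom _ _) = (MonoidAlgebra.lift ℤ A R (hA.teichmuller p)).toRingHom :=
  ZR.ringHom_ext fun r => by
    rw [RingHom.comp_apply, AlgHom.toRingHom_eq_coe, RingHom.coe_coe, MonoidAlgebra.lift_of]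
    refine hA.eq_teichmuller_of_pow_eq fun n =>
      ⟨δ (CofRingHom _ _ (of ℤ R ((iterateFrobeniusEquiv R p n).symm r))), ?_, ?_⟩
    · rw [hδ, CtoR_eq_piHom rfl, ZR.piHom_of]
    · rw [← map_pow, ← map_pow, ← map_pow, pow_iterateFrobeniusEquiv_symm]

end CompletionLift

/-- Let `p` be a prime, `R` a perfect `𝔽_p`-algebra and `A` a `p`-ring with
residue algebra `R`:  a commutative ring with a decreasing sequence of ideals
`𝔞₁ ⊇ 𝔞₂ ⊇ …` with `𝔞_i·𝔞_j ⊆ 𝔞_{i+j}`, Hausdorff and complete for the topology defined by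
the `𝔞_ν` (the canonical map `A → lim_ν A/𝔞_ν` is bijective: injectivity is the Hausdorff
condition `hHaus`, surjectivity the completeness condition `hCompl` on compatible families),
together with a surjective ring homomorphism `π_A : A → R` with kernel `𝔞₁`.  Then there is a
unique ring homomorphism `α̂ : C(R) → A` with `π_A ∘ α̂ = π̄`. -/
theorem statement12 (p : ℕ) [Fact p.Prime] (R : Type*) [CommRing R] [CharP R p]
    (hperf : Function.Bijective fun x : R => x ^ p)
    (A : Type*) [CommRing A] (𝔞 : ℕ → Ideal A)
    (hdec : ∀ i, 1 ≤ i → 𝔞 (i + 1) ≤ 𝔞 i)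
    (hmul : ∀ i j, 1 ≤ i → 1 ≤ j → 𝔞 i * 𝔞 j ≤ 𝔞 (i + j))
    (hHaus : ∀ x : A, (∀ ν, 1 ≤ ν → x ∈ 𝔞 ν) → x = 0)
    (hCompl : ∀ f : ℕ → A, (∀ m ν, 1 ≤ m → m ≤ ν → f ν - f m ∈ 𝔞 m) →
      ∃ L : A, ∀ m, 1 ≤ m → L - f m ∈ 𝔞 m)
    (πA : A →+* R) (hπA : Function.Surjective πA) (hker : RingHom.ker πA = 𝔞 1) :
    ∃! α : CR R →+* A, ∀ x : CR R, πA (α x) = CtoR R x := by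
  have : PerfectRing R p := ⟨hperf⟩
  have h𝔞 : IsCompleteFiltration 𝔞 := ⟨hdec, hmul, hHaus, hCompl⟩
  have hA : IsResidueMap 𝔞 πA := ⟨h𝔞, hπA, hker⟩
  set α : ZR R →+* A := (MonoidAlgebra.lift ℤ A R (hA.teichmuller p)).toRingHom
  have hα : πA.comp α = piHom R := ZR.ringHom_ext fun r => by
    rw [RingHom.comp_apply, ZR.piHom_of]
    simp [α, hA.map_teichmuller]
  have hαI : ∀ z ∈ Iid R, α z ∈ 𝔞 1 := fun z hz => by
    rw [← hker, RingHom.mem_ker, ← RingHom.comp_apply, hα]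
    exact hz
  have hlift := map_lift_eq_CtoR h𝔞 hker hα hαI
  refine ⟨Clim.lift h𝔞 α hαI, hlift, fun γ hγ => ?_⟩
  refine Clim.ringHom_ext h𝔞 (ZR.natCast_mem_Iid p) (ZR.Iid_le_sq_sup_span p)
    ((comp_CofRingHom_eq_teichmuller hA hγ).trans
      (comp_CofRingHom_eq_teichmuller hA hlift).symm) ?_
  simpa using natCast_mem_of_ker_eq p hker
end
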